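/- arXiv:1108.1419 — 6 statements merged into one kernel-verified Lean document; each statement's English description precedes it below -/
import Mathlib

section
/- Let A be a finite set with at least 2 elements. The mirror map H : C_A → C_A defined by H(x)_i = x_{-i} for all i ∈ ℤ is Lipschitz continuous with Lipschitz constant 1 for the Cantor metric, but H is not a non-uniform cellular automaton with fixed radius: there is no r ∈ ℕ such that for every i ∈ ℤ there is a local rule f_i of radius r with H(x)_i = f_i(x_{[i-r,i+r]}) for all x. -/
open Classical in
/-- The Cantor distance on the space of configurations `ℤ → A`:
`d(x,y) = 2^{-k}` where `k = min {i : ℕ | x_{[-i,i]} ≠ y_{[-i,i]}}`, and `d(x,x) = 0`. -/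
noncomputable def cantorDist {A : Type*} (x y : ℤ → A) : ℝ :=
  if x = y then 0
  else (2 : ℝ)⁻¹ ^ sInf {k : ℕ | ∃ j : ℤ, |j| ≤ (k : ℤ) ∧ x j ≠ y j}

/-- The mirror map `H(x)_i = x_{-i}` is Lipschitz continuous with
constant 1 for the Cantor metric, but it is not a non-uniform cellular automaton
with fixed radius. -/
theorem stmt3 {A : Type*} [Fintype A] (hA : 2 ≤ Fintype.card A) :
    (∀ x y : ℤ → A,
      cantorDist (fun i : ℤ => x (-i)) (fun i : ℤ => y (-i)) ≤ 1 * cantorDist x y)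
    ∧ ¬ ∃ r : ℕ, ∀ i : ℤ, ∃ f : (Fin (2 * r + 1) → A) → A,
        ∀ x : ℤ → A, x (-i) = f (fun k => x (i - (r : ℤ) + (k : ℕ))) := by
  constructor
  · intro x y
    by_cases h : x = y
    · subst h; simp [cantorDist]
    · have hm : (fun i : ℤ => x (-i)) ≠ (fun i : ℤ => y (-i)) := by
        intro he; apply h; funext j
        have := congrFun he (-j); simpa using this
      rw [one_mul]
      unfold cantorDist
      rw [if_neg hm, if_neg h]
      have hset : {k : ℕ | ∃ j : ℤ, |j| ≤ (k : ℤ) ∧ x (-j) ≠ y (-j)} =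
          {k : ℕ | ∃ j : ℤ, |j| ≤ (k : ℤ) ∧ x j ≠ y j} := by
        ext k; constructor
        · rintro ⟨j, hj, hne⟩; exact ⟨-j, by simpa using hj, hne⟩
        · rintro ⟨j, hj, hne⟩
          exact ⟨-j, by simpa using hj, by simpa using hne⟩
      rw [hset]
  · rintro ⟨r, hr⟩
    obtain ⟨a, b, hab⟩ := Fintype.exists_pair_of_one_lt_card (by omega : 1 < Fintype.card A)
    obtain ⟨f, hf⟩ := hr (r + 1)
    set x : ℤ → A := fun _ => a with hx
    set x' : ℤ → A := fun j => if j = -(r + 1 : ℤ) then b else a with hx'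
    have h1 := hf x
    have h2 := hf x'
    have hw : (fun k : Fin (2 * r + 1) => x ((r + 1 : ℤ) - r + (k : ℕ))) =
        (fun k : Fin (2 * r + 1) => x' ((r + 1 : ℤ) - r + (k : ℕ))) := by
      funext k
      have hk : (0 : ℤ) ≤ ((k : ℕ) : ℤ) := Int.natCast_nonneg _
      have hne : ((r + 1 : ℤ) - r + (k : ℕ)) ≠ -(r + 1 : ℤ) := by omega
      simp only [hx, hx']
      split_ifs with h
      · exact absurd h (by omega)
      · rfl
    rw [hw] at h1
    have heq : x (-(r + 1 : ℤ)) = x' (-(r + 1 : ℤ)) := by rw [h1, h2]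
    simp [hx, hx'] at heq
    exact hab heq
end

section
/- Let A be a finite set with at least 2 elements, let R be a finite set of local rules on A all of radius r, and let θ : ℤ → R be a distribution. The induced map H_θ : C_A → C_A is surjective if and only if for all integers i ≤ j the partial transition function h_{θ_{[i,j]}} : A^{(j-i+1)+2r} → A^{j-i+1} is surjective. -/
/-! The forward direction is immediate. Conversely, give `A` the discrete topology, so that
`ℤ → A` is compact and each output coordinate of `H_θ` is continuous. For a target `u`, the
closed sets `{x | H_θ(x)_m = u_m}` then have the finite intersection property, because every
finite set of coordinates lies in a window `[i, j]` on which `h_{θ_{[i,j]}}` is surjective. -/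

theorem CompactSpace.exists_forall_eq_of_forall_finset {X ι B : Type*} [TopologicalSpace X]
    [CompactSpace X] [TopologicalSpace B] [T1Space B] (F : ι → X → B)
    (hF : ∀ i, Continuous (F i)) (u : ι → B) (h : ∀ s : Finset ι, ∃ x, ∀ i ∈ s, F i x = u i) :
    ∃ x, ∀ i, F i x = u i := by
  have hne : (⋂ i, F i ⁻¹' {u i}).Nonempty :=
    CompactSpace.iInter_nonempty (fun i => isClosed_singleton.preimage (hF i)) fun s => by
      obtain ⟨x, hx⟩ := h s
      exact ⟨x, Set.mem_iInter₂.mpr hx⟩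
  obtain ⟨x, hx⟩ := hne
  exact ⟨x, Set.mem_iInter.mp hx⟩

theorem CompactSpace.exists_forall_eq_of_forall_Icc {X B : Type*} [TopologicalSpace X]
    [CompactSpace X] [TopologicalSpace B] [T1Space B] (F : ℤ → X → B)
    (hF : ∀ m, Continuous (F m)) (u : ℤ → B)
    (h : ∀ i j : ℤ, i ≤ j → ∃ x, ∀ m, i ≤ m → m ≤ j → F m x = u m) :
    ∃ x, ∀ m, F m x = u m := by
  refine exists_forall_eq_of_forall_finset F hF u fun s => ?_
  set N : ℕ := s.sup Int.natAbs
  obtain ⟨x, hx⟩ := h (-N) N (by omega)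
  refine ⟨x, fun m hm => hx m ?_ ?_⟩ <;>
  · have : m.natAbs ≤ N := Finset.le_sup hm
    omega

theorem continuous_apply_window {A B : Type*} [TopologicalSpace A] [DiscreteTopology A]
    [TopologicalSpace B] {n : ℕ} (f : (Fin n → A) → B) (a : ℤ) :
    Continuous fun x : ℤ → A => f fun k => x (a + (k : ℕ)) :=
  continuous_of_discreteTopology.comp (continuous_pi fun _ => continuous_apply _)

theorem stmt4_general {A : Type*} [Fintype A] (r : ℕ)
    {R : Type*} (rule : R → (Fin (2 * r + 1) → A) → A) (θ : ℤ → R) :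
    Function.Surjective
        (fun x : ℤ → A => fun i : ℤ => rule (θ i) (fun k => x (i - (r : ℤ) + (k : ℕ))))
    ↔ ∀ i j : ℤ, i ≤ j → ∀ u : ℤ → A, ∃ w : ℤ → A,
        ∀ m : ℤ, i ≤ m → m ≤ j →
          rule (θ m) (fun k => w (m - (r : ℤ) + (k : ℕ))) = u m := by
  constructor
  · intro hsurj i j _ u
    obtain ⟨x, hx⟩ := hsurj u
    exact ⟨x, fun m _ _ => congrFun hx m⟩
  · intro h u
    let : TopologicalSpace A := ⊥
    have : DiscreteTopology A := ⟨rfl⟩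
    obtain ⟨x, hx⟩ := CompactSpace.exists_forall_eq_of_forall_Icc
      (fun m (x : ℤ → A) => rule (θ m) fun k => x (m - (r : ℤ) + (k : ℕ)))
      (fun m => continuous_apply_window (rule (θ m)) _) u fun i j hij => h i j hij u
    exact ⟨x, funext hx⟩

/-- The r-ν-CA `H_θ` induced by a distribution `θ` over a finite set `R`
of local rules of radius `r` is surjective iff all its partial transition functions
`h_{θ_{[i,j]}}` are surjective. Here `R` is a finite type indexing the rules and
`rule ρ` is the local rule of radius `r` associated to `ρ ∈ R`; surjectivity of the
partial transition function `h_{θ_{[i,j]}} : A^{(j-i+1)+2r} → A^{j-i+1}` is expressed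
as: every word `u` on `[i,j]` is the image of (the relevant window `[i-r, j+r]` of)
some configuration `w`. -/
theorem stmt4 {A : Type*} [Fintype A] (hA : 2 ≤ Fintype.card A) (r : ℕ)
    {R : Type*} [Fintype R] (rule : R → (Fin (2 * r + 1) → A) → A) (θ : ℤ → R) :
    Function.Surjective
        (fun x : ℤ → A => fun i : ℤ => rule (θ i) (fun k => x (i - (r : ℤ) + (k : ℕ))))
    ↔ ∀ i j : ℤ, i ≤ j → ∀ u : ℤ → A, ∃ w : ℤ → A,
        ∀ m : ℤ, i ≤ m → m ≤ j →
          rule (θ m) (fun k => w (m - (r : ℤ) + (k : ℕ))) = u m :=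
  stmt4_general r rule θ
end

section
/- Let A be a finite set with at least 2 elements and let R be a finite set of local rules on A all of radius r ≥ 1. The set F_R = { ψ ∈ R^* : the partial transition function h_ψ is not surjective } is a regular language over the alphabet R (it is recognized by a finite automaton). -/
/-!
Read `ψ` from left to right and, for each output word `u`, keep track of the set of length-`2r`
suffixes of the inputs `w` with `h_ψ(w) = u`. Appending one rule to `ψ` and one letter to `u`
transforms this set by a map that depends only on the rule and the letter, so the family of all
these sets (one per `u`) is updated letter by letter and ranges over a finite type: it is the
state of a finite automaton. The map `h_ψ` fails to be surjective exactly when the family contains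
the empty set.
-/

theorem Language.isRegular_preimage_of_append_singleton {α σ : Type*} [Finite σ] (f : List α → σ)
    (δ : σ → α → σ) (hf : ∀ x a, f (x ++ [a]) = δ (f x) a) (P : Set σ) :
    Language.IsRegular {x : List α | f x ∈ P} := by
  have := Fintype.ofFinite σ
  refine Language.isRegular_iff.mpr ⟨σ, this, ⟨δ, f [], P⟩, ?_⟩
  ext x
  suffices h : (⟨δ, f [], P⟩ : DFA α σ).eval x = f x by rw [DFA.mem_accepts, h]; rfl
  induction x using List.reverseRecOn with
  | nil => rfl
  | append_singleton x a ih => rw [DFA.eval_append_singleton, ih, hf]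

namespace NonuniformCA

variable {A R : Type*}

def window (w : ℕ → A) (m : ℕ) {n : ℕ} : Fin n → A := fun k => w (m + k)

theorem tail_window (w : ℕ → A) (m n : ℕ) :
    Fin.tail (window w m : Fin (n + 1) → A) = window w (m + 1) := by
  funext k
  simp only [Fin.tail, window, Fin.val_succ]
  congr 1
  omega

variable {n : ℕ} (rule : R → (Fin (n + 1) → A) → A)

/-- `w` is an input of `h_ψ` and `u` the prescribed output; the letters of `w` from position
`ψ.length + n` on and of `u` from position `ψ.length` on play no role. -/
def Solves (ψ : List R) (u w : ℕ → A) : Prop :=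
  ∀ m (hm : m < ψ.length), rule ψ[m] (window w m) = u m

theorem solves_append_singleton (ψ : List R) (ρ : R) (u w : ℕ → A) :
    Solves rule (ψ ++ [ρ]) u w ↔ Solves rule ψ u w ∧ rule ρ (window w ψ.length) = u ψ.length := by
  constructor
  · intro h
    refine ⟨fun m hm => ?_, ?_⟩
    · have := h m (by simp; omega)
      rwa [List.getElem_append_left hm] at this
    · simpa using h ψ.length (by simp)
  · rintro ⟨h, hlast⟩ m hm
    rcases Nat.lt_or_ge m ψ.length with hlt | hge
    · rw [List.getElem_append_left hlt]
      exact h m hlt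
    · obtain rfl : m = ψ.length := by simp at hm; omega
      simpa using hlast

theorem solves_congr (ψ : List R) {u u' : ℕ → A} (h : ∀ m < ψ.length, u m = u' m)
    (w : ℕ → A) : Solves rule ψ u w ↔ Solves rule ψ u' w :=
  forall₂_congr fun m hm => by rw [h m hm]

def finalWindows (ψ : List R) (u : ℕ → A) : Set (Fin n → A) :=
  (fun w => window w ψ.length) '' {w | Solves rule ψ u w}

def windowStep (ρ : R) (b : A) (S : Set (Fin n → A)) : Set (Fin n → A) :=
  Fin.tail '' {x : Fin (n + 1) → A | Fin.init x ∈ S ∧ rule ρ x = b}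

theorem finalWindows_append_singleton (ψ : List R) (ρ : R) (u : ℕ → A) :
    finalWindows rule (ψ ++ [ρ]) u = windowStep rule ρ (u ψ.length) (finalWindows rule ψ u) := by
  ext v
  simp only [finalWindows, windowStep, Set.mem_image, Set.mem_ofPred_eq,
    solves_append_singleton, List.length_append, List.length_singleton]
  constructor
  · rintro ⟨w, ⟨hw, hρ⟩, rfl⟩
    exact ⟨window w ψ.length, ⟨⟨w, hw, rfl⟩, hρ⟩, tail_window w _ _⟩
  · rintro ⟨x, ⟨⟨w, hw, hwx⟩, hρ⟩, rfl⟩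
    -- extend `w` beyond the last window so that its final `n + 1` letters read `x`
    set w' : ℕ → A := fun k => if k < ψ.length + n then w k else x (Fin.last n)
    have hw'x : (window w' ψ.length : Fin (n + 1) → A) = x := by
      funext k
      induction k using Fin.lastCases with
      | last => simp [w', window]
      | cast j => simpa [w', window, Fin.init] using congrFun hwx j
    have hw' : Solves rule ψ u w' := fun m hm => by
      rw [← hw m hm]
      congr 1
      funext k
      simp only [w', window, if_pos (show m + k < ψ.length + n by omega)]
    exact ⟨w', ⟨hw', hw'x ▸ hρ⟩, by rw [← hw'x, tail_window]⟩

def reachableFinalWindows (ψ : List R) : Set (Set (Fin n → A)) :=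
  Set.range (finalWindows rule ψ)

theorem reachableFinalWindows_append_singleton (ψ : List R) (ρ : R) :
    reachableFinalWindows rule (ψ ++ [ρ]) =
      ⋃ b, windowStep rule ρ b '' reachableFinalWindows rule ψ := by
  ext S
  simp only [reachableFinalWindows, Set.mem_range, Set.mem_iUnion, Set.mem_image,
    finalWindows_append_singleton]
  constructor
  · rintro ⟨u, rfl⟩
    exact ⟨u ψ.length, _, ⟨u, rfl⟩, rfl⟩
  · rintro ⟨b, _, ⟨u, rfl⟩, rfl⟩
    refine ⟨Function.update u ψ.length b, ?_⟩
    have : finalWindows rule ψ (Function.update u ψ.length b) = finalWindows rule ψ u := by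
      simp only [finalWindows, solves_congr rule ψ
        (fun m hm => Function.update_of_ne hm.ne b u)]
    rw [this, Function.update_self]

theorem empty_mem_reachableFinalWindows_iff [Nonempty A] (ψ : List R) :
    ∅ ∈ reachableFinalWindows rule ψ ↔
      ¬ ∀ u : Fin ψ.length → A, ∃ w : ℕ → A,
        ∀ m : Fin ψ.length, rule (ψ.get m) (window w m) = u m := by
  simp only [reachableFinalWindows, Set.mem_range, finalWindows, Set.image_eq_empty]
  constructor
  · rintro ⟨u, hu⟩ hsurj
    obtain ⟨w, hw⟩ := hsurj (fun m => u m)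
    exact hu.subset (fun m hm => hw ⟨m, hm⟩ : Solves rule ψ u w)
  · intro h
    obtain ⟨u, hu⟩ := not_forall.mp h
    refine ⟨fun m => if hm : m < ψ.length then u ⟨m, hm⟩ else Classical.arbitrary A,
      Set.eq_empty_of_forall_notMem fun w hw => hu ⟨w, fun m => ?_⟩⟩
    simpa using hw m m.isLt

end NonuniformCA

theorem stmt6_general {A : Type*} [Fintype A] (hA : 2 ≤ Fintype.card A)
    (r : ℕ) {R : Type*}
    (rule : R → (Fin (2 * r + 1) → A) → A) :
    Language.IsRegular { ψ : List R |
      ¬ ∀ u : Fin ψ.length → A, ∃ w : ℕ → A,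
          ∀ m : Fin ψ.length,
            rule (ψ.get m) (fun k => w ((m : ℕ) + (k : ℕ))) = u m } := by
  have : Nonempty A := Fintype.card_pos_iff.mp (by omega)
  have h := Language.isRegular_preimage_of_append_singleton
    (NonuniformCA.reachableFinalWindows rule)
    (fun T ρ => ⋃ b, NonuniformCA.windowStep rule ρ b '' T)
    (NonuniformCA.reachableFinalWindows_append_singleton rule) {T | ∅ ∈ T}
  simp only [Set.mem_ofPred_eq, NonuniformCA.empty_mem_reachableFinalWindows_iff] at h
  exact h

/-- The set `F_R` of finite distributions `ψ ∈ R^*` whose partial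
transition function `h_ψ : A^{|ψ|+2r} → A^{|ψ|}` is not surjective is a regular
language over the alphabet `R`. Surjectivity of `h_ψ` is expressed as: every word
`u ∈ A^{|ψ|}` is the image of (the relevant window of) some `w`. -/
theorem stmt6 {A : Type*} [Fintype A] (hA : 2 ≤ Fintype.card A)
    (r : ℕ) (hr : 1 ≤ r) {R : Type*} [Fintype R]
    (rule : R → (Fin (2 * r + 1) → A) → A) :
    Language.IsRegular { ψ : List R |
      ¬ ∀ u : Fin ψ.length → A, ∃ w : ℕ → A,
          ∀ m : Fin ψ.length,
            rule (ψ.get m) (fun k => w ((m : ℕ) + (k : ℕ))) = u m } :=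
  stmt6_general hA r rule
end

section
/- Let A be a finite set with at least 2 elements and let R be a finite set of local rules on A all of radius r. The set Surj(R) = { θ : ℤ → R : H_θ is surjective } is a subshift of R^ℤ: it is closed for the product topology, invariant under the shift (σ(Surj(R)) = Surj(R) where σ(θ)_i = θ_{i+1}), and it equals the set of distributions θ such that no finite factor θ_{[i,j]} (i ≤ j) belongs to F_R = { ψ ∈ R^* : h_ψ is not surjective }. -/
/-- The r-ν-CA induced by the distribution `θ : ℤ → R`, where `rule ρ` is the local
rule of radius `r` indexed by `ρ ∈ R`. -/
def nuCA {A R : Type*} (r : ℕ) (rule : R → (Fin (2 * r + 1) → A) → A)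
    (θ : ℤ → R) (x : ℤ → A) : ℤ → A :=
  fun i => rule (θ i) (fun k => x (i - (r : ℤ) + (k : ℕ)))

/-!
`H_θ` is continuous on the compact space `A^ℤ`, so its image is closed. If every partial
transition function of `θ` is surjective, every `u` is a limit of images agreeing with `u` on
`[-n, n]`, so the image is also dense, hence everything. Each window condition only involves
`θ` on `[i, j]`, which makes the set of such `θ` closed, and shifting `θ` conjugates `H_θ` by
shifts of configurations.
-/

open Function Filter Topology SymbolicDynamics.FullShift

theorem DependsOn.isClosed_setOf {ι X : Type*} [TopologicalSpace X] [DiscreteTopology X]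
    {p : (ι → X) → Prop} {S : Finset ι} (hp : DependsOn p S) : IsClosed {x | p x} := by
  refine isOpen_compl_iff.1 <| isOpen_iff_forall_mem_open.2 fun x hx =>
    ⟨cylinder S x, fun y hy hpy => hx ?_, isOpen_cylinder S x, fun _ _ => rfl⟩
  exact (hp hy).mp hpy

section

variable {A R : Type*} {r : ℕ} (rule : R → (Fin (2 * r + 1) → A) → A)

/-- The partial transition function `h_ψ` of `ψ = θ_{[i,j]}` is surjective. -/
def PartialSurjective (θ : ℤ → R) (i j : ℤ) : Prop :=
  ∀ u : ℤ → A, ∃ w : ℤ → A, ∀ m, i ≤ m → m ≤ j → nuCA r rule θ w m = u m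

theorem continuous_nuCA [TopologicalSpace A] [DiscreteTopology A] (θ : ℤ → R) :
    Continuous (nuCA r rule θ) :=
  continuous_pi fun _ => continuous_of_discreteTopology.comp <|
    continuous_pi fun _ => continuous_apply _

theorem surjective_nuCA_iff_forall_partialSurjective [Finite A] (θ : ℤ → R) :
    Surjective (nuCA r rule θ) ↔ ∀ i j, i ≤ j → PartialSurjective rule θ i j := by
  let _ : TopologicalSpace A := ⊥
  have : DiscreteTopology A := ⟨rfl⟩
  refine ⟨fun hs i j _ u => (hs u).imp fun w hw m _ _ => congrFun hw m, fun hwin u => ?_⟩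
  choose w hw using fun n : ℕ => hwin (-n) n (by omega) u
  have hlim : Tendsto (fun n => nuCA r rule θ (w n)) atTop (𝓝 u) := by
    refine tendsto_pi_nhds.2 fun m => tendsto_const_nhds.congr' ?_
    filter_upwards [eventually_ge_atTop m.natAbs] with n hn
    exact (hw n m (by omega) (by omega)).symm
  have hclosed : IsClosed (Set.range (nuCA r rule θ)) :=
    (isCompact_range (continuous_nuCA rule θ)).isClosed
  exact hclosed.closure_subset <|
    mem_closure_of_tendsto hlim (Eventually.of_forall fun n => Set.mem_range_self _)

theorem isClosed_setOf_forall_partialSurjective [TopologicalSpace R] [DiscreteTopology R] :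
    IsClosed {θ : ℤ → R | ∀ i j, i ≤ j → PartialSurjective rule θ i j} := by
  simp only [Set.ofPred_forall]
  refine isClosed_iInter fun i => isClosed_iInter fun j => isClosed_iInter fun _ =>
    DependsOn.isClosed_setOf (S := Finset.Icc i j) fun θ θ' hθ => propext ?_
  refine forall_congr' fun u => exists_congr fun w => forall_congr' fun m =>
    imp_congr_right fun him => imp_congr_right fun hmj => ?_
  rw [nuCA, nuCA, hθ m (by simp [him, hmj])]

theorem surjective_nuCA_shift {θ : ℤ → R} (h : Surjective (nuCA r rule θ)) (c : ℤ) :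
    Surjective (nuCA r rule fun i => θ (i + c)) := by
  intro u
  obtain ⟨y, hy⟩ := h fun i => u (i - c)
  refine ⟨fun j => y (j + c), funext fun i => ?_⟩
  have := congrFun hy (i + c)
  simp only [nuCA, add_sub_cancel_right] at this ⊢
  convert this using 4 with k
  ring

theorem image_shift_setOf_surjective_nuCA :
    (fun θ : ℤ → R => fun i => θ (i + 1)) '' {θ | Surjective (nuCA r rule θ)}
      = {θ | Surjective (nuCA r rule θ)} := by
  ext η
  refine ⟨?_, fun hη => ⟨fun i => η (i + -1), surjective_nuCA_shift rule hη (-1), ?_⟩⟩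
  · rintro ⟨θ, hθ, rfl⟩
    exact surjective_nuCA_shift rule hθ 1
  · simp

end

theorem stmt7_general {A : Type*} [Fintype A] (r : ℕ)
    {R : Type*} [TopologicalSpace R] [DiscreteTopology R]
    (rule : R → (Fin (2 * r + 1) → A) → A) :
    IsClosed {θ : ℤ → R | Function.Surjective (nuCA r rule θ)}
    ∧ (fun θ : ℤ → R => fun i : ℤ => θ (i + 1)) ''
          {θ : ℤ → R | Function.Surjective (nuCA r rule θ)}
        = {θ : ℤ → R | Function.Surjective (nuCA r rule θ)}
    ∧ {θ : ℤ → R | Function.Surjective (nuCA r rule θ)}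
        = {θ : ℤ → R | ∀ i j : ℤ, i ≤ j → ∀ u : ℤ → A, ∃ w : ℤ → A,
            ∀ m : ℤ, i ≤ m → m ≤ j →
              rule (θ m) (fun k => w (m - (r : ℤ) + (k : ℕ))) = u m} := by
  have hwindows : {θ : ℤ → R | Surjective (nuCA r rule θ)}
      = {θ | ∀ i j, i ≤ j → PartialSurjective rule θ i j} :=
    Set.ext (surjective_nuCA_iff_forall_partialSurjective rule)
  refine ⟨?_, image_shift_setOf_surjective_nuCA rule, hwindows⟩
  rw [hwindows]
  exact isClosed_setOf_forall_partialSurjective rule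

/-- `Surj(R) = {θ : H_θ surjective}` is a subshift of `R^ℤ`: it is
closed for the product topology, shift-invariant, and equals the set of
distributions none of whose finite factors `θ_{[i,j]}` lies in
`F_R = {ψ : h_ψ not surjective}` (i.e. all partial transition functions of `θ`
are surjective). -/
theorem stmt7 {A : Type*} [Fintype A] (hA : 2 ≤ Fintype.card A) (r : ℕ)
    {R : Type*} [Fintype R] [TopologicalSpace R] [DiscreteTopology R]
    (rule : R → (Fin (2 * r + 1) → A) → A) :
    IsClosed {θ : ℤ → R | Function.Surjective (nuCA r rule θ)}
    ∧ (fun θ : ℤ → R => fun i : ℤ => θ (i + 1)) ''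
          {θ : ℤ → R | Function.Surjective (nuCA r rule θ)}
        = {θ : ℤ → R | Function.Surjective (nuCA r rule θ)}
    ∧ {θ : ℤ → R | Function.Surjective (nuCA r rule θ)}
        = {θ : ℤ → R | ∀ i j : ℤ, i ≤ j → ∀ u : ℤ → A, ∃ w : ℤ → A,
            ∀ m : ℤ, i ≤ m → m ≤ j →
              rule (θ m) (fun k => w (m - (r : ℤ) + (k : ℕ))) = u m} :=
  stmt7_general r rule
end

section
/- Let A = {0, 1, …, s-1} with s ≥ 2 and let H : C_A → C_A be a non-uniform cellular automaton with fixed radius r. Then H is number-conserving (NC) if and only if H is number-conserving on finite configurations (FNC), i.e., H(0̄) = 0̄ together with the convergence to 1 of μ_n(H(x))/μ_n(x) for every x ≠ 0̄ holds if and only if μ(H(x)) = μ(x) for every finite configuration x. -/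
/-!
Everything rests on locality. Under FNC, `H 0 = 0`, so `H` maps configurations supported in
`[-m, m]` to configurations supported in `[-m-r, m+r]`. For arbitrary `x` and `n ≥ r`, the
restriction `y` of `x` to `[-n, n]` is finite, so `H y` carries the charge `μ_n(x)`, while `H y`
agrees with `H x` on `[-(n-r), n-r]`. Hence `μ_n(H x)` and `μ_n(x)` differ by at most
`4r(s-1)`, which is negligible once `μ_n(x) → ∞`, i.e. when `x` has infinite support; for finite
`x` the two partial charges are eventually equal. Conversely, for finite `x` both partial charges
are eventually constant, so a limit ratio of `1` forces them to coincide.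
-/

open Filter Finset Asymptotics

lemma tendsto_div_one_of_abs_sub_le {α : Type*} {l : Filter α} {u v : α → ℝ} {C : ℝ}
    (hv : Tendsto v l atTop) (huv : ∀ᶠ a in l, |u a - v a| ≤ C) :
    Tendsto (fun a => u a / v a) l (nhds 1) := by
  have hbdd : (u - v) =O[l] (fun _ => (1 : ℝ)) :=
    (isBigO_one_iff ℝ).2
      ⟨C, by simpa only [eventually_map, Real.norm_eq_abs, Pi.sub_apply] using huv⟩
  have hequiv : u ~[l] v :=
    hbdd.trans_isLittleO ((isLittleO_one_left_iff ℝ).2 (tendsto_norm_atTop_atTop.comp hv))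
  exact (isEquivalent_iff_tendsto_one (hv.eventually_ne_atTop 0)).1 hequiv

variable {s : ℕ}

/-- The partial charge `μ_n(x)`. -/
noncomputable def charge (x : ℤ → Fin s) (n : ℕ) : ℕ := ∑ i ∈ Icc (-(n : ℤ)) n, (x i : ℕ)

lemma Icc_neg_subset_Icc_neg {a b : ℕ} (h : a ≤ b) : Icc (-(a : ℤ)) a ⊆ Icc (-(b : ℤ)) b :=
  Icc_subset_Icc (by omega) (by omega)

lemma charge_mono (x : ℤ → Fin s) : Monotone (charge x) :=
  fun _ _ h => sum_le_sum_of_subset (Icc_neg_subset_Icc_neg h)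

lemma charge_le_charge_add (x : ℤ → Fin s) {a b : ℕ} (h : a ≤ b) :
    charge x b ≤ charge x a + 2 * (b - a) * (s - 1) := by
  have hsub := Icc_neg_subset_Icc_neg h
  have hcard : #(Icc (-(b : ℤ)) b \ Icc (-(a : ℤ)) a) = 2 * (b - a) := by
    rw [card_sdiff_of_subset hsub, Int.card_Icc, Int.card_Icc]
    omega
  have hcells : ∑ i ∈ Icc (-(b : ℤ)) b \ Icc (-(a : ℤ)) a, (x i : ℕ) ≤ 2 * (b - a) * (s - 1) := by
    simpa [hcard] using sum_le_card_nsmul (Icc (-(b : ℤ)) b \ Icc (-(a : ℤ)) a)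
      (fun i => (x i : ℕ)) (s - 1) fun i _ => Nat.le_sub_one_of_lt (x i).isLt
  unfold charge
  rw [← sum_sdiff hsub]
  omega

def IsNonUniformCA (r : ℕ) (H : (ℤ → Fin s) → ℤ → Fin s) : Prop :=
  ∀ i : ℤ, ∃ f : (Fin (2 * r + 1) → Fin s) → Fin s,
    ∀ x : ℤ → Fin s, H x i = f (fun k => x (i - (r : ℤ) + (k : ℕ)))

lemma IsNonUniformCA.apply_eq_apply {r : ℕ} {H : (ℤ → Fin s) → ℤ → Fin s}
    (hH : IsNonUniformCA r H) {x y : ℤ → Fin s} {i : ℤ}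
    (h : ∀ j, i - r ≤ j → j ≤ i + r → x j = y j) : H x i = H y i := by
  obtain ⟨f, hf⟩ := hH i
  rw [hf, hf]
  congr 1
  funext k
  exact h _ (by omega) (by omega)

variable [NeZero s]

def SupportedIn (x : ℤ → Fin s) (m : ℕ) : Prop := ∀ i : ℤ, m < i.natAbs → x i = 0

lemma SupportedIn.mono {x : ℤ → Fin s} {m n : ℕ} (hx : SupportedIn x m) (h : m ≤ n) :
    SupportedIn x n :=
  fun i hi => hx i (by omega)

lemma SupportedIn.finite {x : ℤ → Fin s} {m : ℕ} (hx : SupportedIn x m) :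
    {i | x i ≠ 0}.Finite :=
  (Set.finite_Icc (-(m : ℤ)) m).subset fun i hi => by
    have := mt (hx i) hi
    simp only [Set.mem_Icc]
    omega

lemma exists_supportedIn {x : ℤ → Fin s} (hx : {i | x i ≠ 0}.Finite) : ∃ m, SupportedIn x m := by
  obtain ⟨m, hm⟩ := (hx.image Int.natAbs).bddAbove
  exact ⟨m, fun i hi => by_contra fun h => hi.not_ge (hm ⟨i, h, rfl⟩)⟩

lemma SupportedIn.charge_eq {x : ℤ → Fin s} {m n : ℕ} (hx : SupportedIn x m) (h : m ≤ n) :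
    charge x n = charge x m := by
  refine (sum_subset (Icc_neg_subset_Icc_neg h) fun i _ hi => ?_).symm
  rw [hx i (by simp only [mem_Icc] at hi; omega), Fin.val_zero]

lemma SupportedIn.tsum_eq {x : ℤ → Fin s} {m : ℕ} (hx : SupportedIn x m) :
    ∑' i, ((x i : ℕ) : ℕ∞) = charge x m := by
  rw [charge, Nat.cast_sum]
  refine tsum_eq_sum fun i hi => ?_
  rw [hx i (by simp only [mem_Icc] at hi; omega), Fin.val_zero, Nat.cast_zero]

lemma SupportedIn.charge_pos {x : ℤ → Fin s} {m : ℕ} (hx : SupportedIn x m) (h0 : x ≠ 0) :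
    0 < charge x m := by
  obtain ⟨i, hi⟩ := Function.ne_iff.1 h0
  have hmem : i ∈ Icc (-(m : ℤ)) m := by
    have := mt (hx i) hi
    simp only [mem_Icc]
    omega
  exact (Fin.val_pos_iff.2 (Fin.pos_iff_ne_zero.2 hi)).trans_le
    (single_le_sum (f := fun i => (x i : ℕ)) (fun _ _ => Nat.zero_le _) hmem)

lemma tendsto_charge_atTop {x : ℤ → Fin s} (hx : {i | x i ≠ 0}.Infinite) :
    Tendsto (charge x) atTop atTop := by
  refine tendsto_atTop_atTop_of_monotone (charge_mono x) fun B => ?_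
  obtain ⟨T, hT, rfl⟩ := hx.exists_subset_card_eq B
  refine ⟨T.sup Int.natAbs, ?_⟩
  have hTsub : T ⊆ Icc (-((T.sup Int.natAbs : ℕ) : ℤ)) (T.sup Int.natAbs : ℕ) := fun i hi => by
    have := le_sup (f := Int.natAbs) hi
    simp only [mem_Icc]
    omega
  calc #T = ∑ _i ∈ T, 1 := card_eq_sum_ones T
    _ ≤ ∑ i ∈ T, (x i : ℕ) :=
        sum_le_sum fun i hi => Fin.val_pos_iff.2 (Fin.pos_iff_ne_zero.2 (hT hi))
    _ ≤ charge x (T.sup Int.natAbs) := sum_le_sum_of_subset hTsub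

lemma supportedIn_indicator (x : ℤ → Fin s) (n : ℕ) :
    SupportedIn ((Set.Icc (-(n : ℤ)) n).indicator x) n :=
  fun i hi => Set.indicator_of_notMem (by simp only [Set.mem_Icc]; omega) x

lemma charge_indicator (x : ℤ → Fin s) (n : ℕ) :
    charge ((Set.Icc (-(n : ℤ)) n).indicator x) n = charge x n :=
  sum_congr rfl fun i hi => by rw [Set.indicator_of_mem (by simpa using hi)]

def IsNumberConservingOnFinite (H : (ℤ → Fin s) → ℤ → Fin s) : Prop :=
  ∀ x : ℤ → Fin s, {i : ℤ | x i ≠ 0}.Finite →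
    (∑' i : ℤ, ((H x i : ℕ) : ℕ∞)) = ∑' i : ℤ, ((x i : ℕ) : ℕ∞)

lemma IsNumberConservingOnFinite.map_zero {H : (ℤ → Fin s) → ℤ → Fin s}
    (hH : IsNumberConservingOnFinite H) : H 0 = 0 := by
  have hsum : ∑' i, ((H 0 i : ℕ) : ℕ∞) = 0 := by simpa using hH 0 (by simp)
  have hsummable : Summable fun i => ((H 0 i : ℕ) : ℕ∞) :=
    ⟨_, tendsto_atTop_iSup (sum_mono_set _)⟩
  funext i
  exact Fin.val_eq_zero_iff.1 (by exact_mod_cast hsummable.tsum_eq_zero_iff.1 hsum i)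

namespace IsNonUniformCA

variable {r : ℕ} {H : (ℤ → Fin s) → ℤ → Fin s}

lemma supportedIn_map (hH : IsNonUniformCA r H) (hH0 : H 0 = 0) {x : ℤ → Fin s} {m : ℕ}
    (hx : SupportedIn x m) : SupportedIn (H x) (m + r) := fun i hi => by
  rw [hH.apply_eq_apply (y := 0) fun j _ _ => hx j (by omega), hH0, Pi.zero_apply]

lemma charge_map_eq (hH : IsNonUniformCA r H) (hFNC : IsNumberConservingOnFinite H)
    {x : ℤ → Fin s} {m n : ℕ} (hx : SupportedIn x m) (h : m + r ≤ n) :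
    charge (H x) n = charge x n := by
  have hHx := hH.supportedIn_map hFNC.map_zero hx
  have hx' := hx.mono (m.le_add_right r)
  have hcons := hFNC x hx.finite
  rw [hHx.tsum_eq, hx'.tsum_eq, Nat.cast_inj] at hcons
  rw [hHx.charge_eq h, hx'.charge_eq h, hcons]

lemma charge_map_indicator_add_eq (hH : IsNonUniformCA r H) (hFNC : IsNumberConservingOnFinite H)
    (x : ℤ → Fin s) (n : ℕ) :
    charge (H ((Set.Icc (-(n : ℤ)) n).indicator x)) (n + r) = charge x n := by
  have hy := supportedIn_indicator x n
  rw [hH.charge_map_eq hFNC hy le_rfl, hy.charge_eq (n.le_add_right r), charge_indicator]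

lemma charge_map_indicator_sub_eq (hH : IsNonUniformCA r H) (x : ℤ → Fin s) {n : ℕ}
    (h : r ≤ n) :
    charge (H ((Set.Icc (-(n : ℤ)) n).indicator x)) (n - r) = charge (H x) (n - r) :=
  sum_congr rfl fun i hi => by
    rw [hH.apply_eq_apply fun j _ _ => Set.indicator_of_mem (s := Set.Icc (-(n : ℤ)) n) ?_ x]
    simp only [mem_Icc] at hi
    simp only [Set.mem_Icc]
    omega

lemma charge_map_le (hH : IsNonUniformCA r H) (hFNC : IsNumberConservingOnFinite H)
    (x : ℤ → Fin s) {n : ℕ} (h : r ≤ n) :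
    charge (H x) n ≤ charge x n + 2 * r * (s - 1) :=
  calc charge (H x) n ≤ charge (H x) (n - r) + 2 * (n - (n - r)) * (s - 1) :=
        charge_le_charge_add _ (Nat.sub_le n r)
    _ = charge (H ((Set.Icc (-(n : ℤ)) n).indicator x)) (n - r) + 2 * r * (s - 1) := by
        rw [hH.charge_map_indicator_sub_eq x h, Nat.sub_sub_self h]
    _ ≤ charge (H ((Set.Icc (-(n : ℤ)) n).indicator x)) (n + r) + 2 * r * (s - 1) := by
        gcongr
        exact charge_mono _ (by omega)
    _ = charge x n + 2 * r * (s - 1) := by rw [hH.charge_map_indicator_add_eq hFNC]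

lemma charge_le_charge_map (hH : IsNonUniformCA r H) (hFNC : IsNumberConservingOnFinite H)
    (x : ℤ → Fin s) {n : ℕ} (h : r ≤ n) :
    charge x n ≤ charge (H x) n + 4 * r * (s - 1) :=
  calc charge x n = charge (H ((Set.Icc (-(n : ℤ)) n).indicator x)) (n + r) :=
        (hH.charge_map_indicator_add_eq hFNC x n).symm
    _ ≤ charge (H ((Set.Icc (-(n : ℤ)) n).indicator x)) (n - r)
          + 2 * (n + r - (n - r)) * (s - 1) := charge_le_charge_add _ (by omega)
    _ = charge (H x) (n - r) + 4 * r * (s - 1) := by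
        rw [hH.charge_map_indicator_sub_eq x h, show n + r - (n - r) = 2 * r by omega]
        ring
    _ ≤ charge (H x) n + 4 * r * (s - 1) := by
        gcongr
        exact charge_mono _ (Nat.sub_le n r)

lemma abs_charge_map_sub_le (hH : IsNonUniformCA r H) (hFNC : IsNumberConservingOnFinite H)
    (x : ℤ → Fin s) {n : ℕ} (h : r ≤ n) :
    |(charge (H x) n : ℝ) - charge x n| ≤ (4 * r * (s - 1) : ℕ) := by
  have hle : charge (H x) n ≤ charge x n + 4 * r * (s - 1) :=
    (hH.charge_map_le hFNC x h).trans (by gcongr; omega)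
  have hge := hH.charge_le_charge_map hFNC x h
  rw [abs_sub_le_iff, sub_le_iff_le_add', sub_le_iff_le_add']
  exact ⟨by exact_mod_cast hle, by exact_mod_cast hge⟩

lemma charge_map_eq_of_tendsto (hH : IsNonUniformCA r H) (hH0 : H 0 = 0) {x : ℤ → Fin s}
    {m : ℕ} (hx : SupportedIn x m) (h0 : x ≠ 0)
    (hlim : Tendsto (fun n => (charge (H x) n : ℝ) / charge x n) atTop (nhds 1)) :
    charge (H x) (m + r) = charge x (m + r) := by
  have hHx := hH.supportedIn_map hH0 hx
  have hx' := hx.mono (m.le_add_right r)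
  have hconst : Tendsto (fun n => (charge (H x) n : ℝ) / charge x n) atTop
      (nhds ((charge (H x) (m + r) : ℝ) / charge x (m + r))) :=
    tendsto_const_nhds.congr' <| by
      filter_upwards [eventually_ge_atTop (m + r)] with n hn
      rw [hHx.charge_eq hn, hx'.charge_eq hn]
  have hpos : (0 : ℝ) < charge x (m + r) := by exact_mod_cast hx'.charge_pos h0
  exact_mod_cast (div_eq_one_iff_eq hpos.ne').1 (tendsto_nhds_unique hconst hlim)

end IsNonUniformCA

theorem stmt8_general (s : ℕ) [NeZero s] (r : ℕ)
    (H : (ℤ → Fin s) → (ℤ → Fin s))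
    (hH : ∀ i : ℤ, ∃ f : (Fin (2 * r + 1) → Fin s) → Fin s,
      ∀ x : ℤ → Fin s, H x i = f (fun k => x (i - (r : ℤ) + (k : ℕ)))) :
    (H 0 = 0 ∧ ∀ x : ℤ → Fin s, x ≠ 0 →
        Tendsto (fun n : ℕ =>
            ((∑ i ∈ Finset.Icc (-(n : ℤ)) (n : ℤ), ((H x i : ℕ))) : ℝ) /
            ((∑ i ∈ Finset.Icc (-(n : ℤ)) (n : ℤ), ((x i : ℕ))) : ℝ))
          atTop (nhds 1))
    ↔ (∀ x : ℤ → Fin s, {i : ℤ | x i ≠ 0}.Finite →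
        (∑' i : ℤ, ((H x i : ℕ) : ℕ∞)) = ∑' i : ℤ, ((x i : ℕ) : ℕ∞)) := by
  have hCA : IsNonUniformCA r H := hH
  simp only [← Nat.cast_sum, ← charge.eq_1]
  constructor
  · rintro ⟨hH0, hNC⟩ x hfin
    obtain ⟨m, hm⟩ := exists_supportedIn hfin
    rcases eq_or_ne x 0 with rfl | hx0
    · rw [hH0]
    rw [(hCA.supportedIn_map hH0 hm).tsum_eq, (hm.mono (m.le_add_right r)).tsum_eq,
      hCA.charge_map_eq_of_tendsto hH0 hm hx0 (hNC x hx0)]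
  · intro hFNC
    refine ⟨IsNumberConservingOnFinite.map_zero hFNC, fun x hx0 => ?_⟩
    rcases Set.finite_or_infinite {i | x i ≠ 0} with hfin | hinf
    · obtain ⟨m, hm⟩ := exists_supportedIn hfin
      refine tendsto_const_nhds.congr' ?_
      filter_upwards [eventually_ge_atTop (m + r)] with n hn
      have hpos : (0 : ℝ) < charge x n := by
        exact_mod_cast (hm.mono (by omega)).charge_pos hx0
      rw [hCA.charge_map_eq hFNC hm hn, div_self hpos.ne']
    · exact tendsto_div_one_of_abs_sub_le
        (tendsto_natCast_atTop_atTop.comp (tendsto_charge_atTop hinf))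
        ((eventually_ge_atTop r).mono fun n hn => hCA.abs_charge_map_sub_le hFNC x hn)

/-- For a non-uniform cellular automaton `H` with fixed radius `r` on
the alphabet `A = {0, …, s-1}`, `H` is number-conserving (NC) iff it is
number-conserving on finite configurations (FNC). NC means `H(0̄) = 0̄` and the
ratios `μ_n(H(x))/μ_n(x)` converge to 1 for every `x ≠ 0̄`; FNC means the global
charge `μ(x) = Σ_i x_i` (in `ℕ∞`) is preserved on every finite configuration. -/
theorem stmt8 (s : ℕ) [NeZero s] (hs : 2 ≤ s) (r : ℕ)
    (H : (ℤ → Fin s) → (ℤ → Fin s))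
    (hH : ∀ i : ℤ, ∃ f : (Fin (2 * r + 1) → Fin s) → Fin s,
      ∀ x : ℤ → Fin s, H x i = f (fun k => x (i - (r : ℤ) + (k : ℕ)))) :
    (H 0 = 0 ∧ ∀ x : ℤ → Fin s, x ≠ 0 →
        Tendsto (fun n : ℕ =>
            ((∑ i ∈ Finset.Icc (-(n : ℤ)) (n : ℤ), ((H x i : ℕ))) : ℝ) /
            ((∑ i ∈ Finset.Icc (-(n : ℤ)) (n : ℤ), ((x i : ℕ))) : ℝ))
          atTop (nhds 1))
    ↔ (∀ x : ℤ → Fin s, {i : ℤ | x i ≠ 0}.Finite →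
        (∑' i : ℤ, ((H x i : ℕ) : ℕ∞)) = ∑' i : ℤ, ((x i : ℕ) : ℕ∞)) :=
  stmt8_general s r H hH
end

section
/- Let (A, +, ·) be a finite commutative ring with |A| ≥ 2 and let H : C_A → C_A be a linear non-uniform cellular automaton, i.e., for every i ∈ ℤ there exist r_i ∈ ℕ and coefficients λ^{(i)} ∈ A^{2r_i+1} such that H(x)_i = Σ_{k=0}^{2r_i} λ^{(i)}_k · x_{i-r_i+k} for all x ∈ C_A. Then H is either sensitive to initial conditions or equicontinuous (with respect to the Cantor metric). -/
lemma cantorDist_nonneg {A : Type*} (x y : ℤ → A) : 0 ≤ cantorDist x y := by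
  unfold cantorDist
  split_ifs with h
  · exact le_refl 0
  · positivity

lemma cantorDist_le_of_agree {A : Type*} {x y : ℤ → A} (m : ℕ)
    (h : ∀ j : ℤ, |j| ≤ (m : ℤ) → x j = y j) :
    cantorDist x y ≤ (2 : ℝ)⁻¹ ^ (m + 1) := by
  unfold cantorDist
  split_ifs with hxy
  · positivity
  · apply pow_le_pow_of_le_one (by norm_num) (by norm_num)
    have hne : ∃ j : ℤ, x j ≠ y j := by
      by_contra hc
      push_neg at hc
      exact hxy (funext hc)
    obtain ⟨j, hj⟩ := hne
    have hnonempty : {k : ℕ | ∃ j : ℤ, |j| ≤ (k : ℤ) ∧ x j ≠ y j}.Nonempty :=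
      ⟨j.natAbs, j, le_of_eq (Int.abs_eq_natAbs j), hj⟩
    have hmem := Nat.sInf_mem hnonempty
    obtain ⟨j', hj', hne'⟩ := hmem
    by_contra hlt
    push_neg at hlt
    have : |j'| ≤ (m : ℤ) := by
      refine hj'.trans ?_
      exact_mod_cast Nat.le_of_lt_succ hlt
    exact hne' (h j' this)

lemma le_cantorDist_of_ne {A : Type*} {x y : ℤ → A} (K : ℕ) (j : ℤ)
    (hj : |j| ≤ (K : ℤ)) (hne : x j ≠ y j) :
    (2 : ℝ)⁻¹ ^ K ≤ cantorDist x y := by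
  unfold cantorDist
  split_ifs with hxy
  · exact absurd (congrFun hxy j) hne
  · exact pow_le_pow_of_le_one (by norm_num) (by norm_num) (Nat.sInf_le ⟨j, hj, hne⟩)

lemma agree_of_cantorDist_lt {A : Type*} {x y : ℤ → A} (m : ℕ)
    (h : cantorDist x y < (2 : ℝ)⁻¹ ^ m) :
    ∀ j : ℤ, |j| ≤ (m : ℤ) → x j = y j := by
  intro j hj
  by_contra hne
  exact absurd (le_cantorDist_of_ne m j hj hne) (not_le.mpr h)

/-- A linear non-uniform cellular automaton over a finite commutative
ring is either sensitive to initial conditions or equicontinuous. -/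
theorem stmt11 {A : Type*} [CommRing A] [Fintype A] (hA : 2 ≤ Fintype.card A)
    (H : (ℤ → A) → (ℤ → A))
    (hH : ∀ i : ℤ, ∃ (r : ℕ) (lam : Fin (2 * r + 1) → A),
      ∀ x : ℤ → A,
        H x i = ∑ k : Fin (2 * r + 1), lam k * x (i - (r : ℤ) + (k : ℕ))) :
    (∃ ε > (0 : ℝ), ∀ x : ℤ → A, ∀ δ > (0 : ℝ), ∃ y : ℤ → A,
        cantorDist x y < δ ∧ ∃ n : ℕ, cantorDist (H^[n] x) (H^[n] y) > ε)
    ∨ (∀ x : ℤ → A, ∀ ε > (0 : ℝ), ∃ δ > (0 : ℝ), ∀ y : ℤ → A,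
        cantorDist x y < δ → ∀ n : ℕ, cantorDist (H^[n] x) (H^[n] y) < ε) := by
  -- H is additive
  have hadd : ∀ x z : ℤ → A, H (x + z) = H x + H z := by
    intro x z
    funext i
    obtain ⟨r, lam, hlam⟩ := hH i
    show H (x + z) i = H x i + H z i
    rw [hlam, hlam, hlam, ← Finset.sum_add_distrib]
    exact Finset.sum_congr rfl (fun k _ => by simp [mul_add])
  have hiter : ∀ (n : ℕ) (x z : ℤ → A), H^[n] (x + z) = H^[n] x + H^[n] z := by
    intro n
    induction n with
    | zero => intro x z; simp
    | succ n ih =>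
      intro x z
      rw [Function.iterate_succ_apply', Function.iterate_succ_apply',
        Function.iterate_succ_apply', ih, hadd]
  by_cases hE : ∀ K : ℕ, ∃ m : ℕ, ∀ z : ℤ → A,
      (∀ j : ℤ, |j| ≤ (m : ℤ) → z j = 0) →
      ∀ (n : ℕ) (j : ℤ), |j| ≤ (K : ℤ) → H^[n] z j = 0
  · -- equicontinuous
    right
    intro x ε hε
    obtain ⟨K, hK⟩ := exists_pow_lt_of_lt_one hε (by norm_num : (2 : ℝ)⁻¹ < 1)
    obtain ⟨m, hm⟩ := hE K
    refine ⟨(2 : ℝ)⁻¹ ^ m, by positivity, fun y hy n => ?_⟩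
    have hagree := agree_of_cantorDist_lt m hy
    set z : ℤ → A := y - x with hz
    have hyz : y = x + z := by simp [hz]
    have hz0 : ∀ j : ℤ, |j| ≤ (m : ℤ) → z j = 0 := by
      intro j hj
      simp [hz, ← hagree j hj]
    have hagree' : ∀ j : ℤ, |j| ≤ (K : ℤ) → H^[n] x j = H^[n] y j := by
      intro j hj
      rw [hyz, hiter n x z]
      simp [hm z hz0 n j hj]
    calc cantorDist (H^[n] x) (H^[n] y) ≤ (2 : ℝ)⁻¹ ^ (K + 1) :=
          cantorDist_le_of_agree K hagree'
      _ < (2 : ℝ)⁻¹ ^ K := pow_lt_pow_right_of_lt_one₀ (by norm_num) (by norm_num) K.lt_succ_self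
      _ < ε := hK
  · -- sensitive
    left
    push_neg at hE
    obtain ⟨K, hK⟩ := hE
    refine ⟨(2 : ℝ)⁻¹ ^ (K + 1), by positivity, fun x δ hδ => ?_⟩
    obtain ⟨m, hm⟩ := exists_pow_lt_of_lt_one hδ (by norm_num : (2 : ℝ)⁻¹ < 1)
    obtain ⟨z, hz0, n, j, hj, hnz⟩ := hK m
    refine ⟨x + z, ?_, n, ?_⟩
    · have : cantorDist x (x + z) ≤ (2 : ℝ)⁻¹ ^ (m + 1) := by
        apply cantorDist_le_of_agree
        intro j' hj'
        simp [hz0 j' hj']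
      calc cantorDist x (x + z) ≤ (2 : ℝ)⁻¹ ^ (m + 1) := this
        _ < (2 : ℝ)⁻¹ ^ m := pow_lt_pow_right_of_lt_one₀ (by norm_num) (by norm_num) m.lt_succ_self
        _ < δ := hm
    · have hne : H^[n] x j ≠ H^[n] (x + z) j := by
        rw [hiter n x z]
        simpa using hnz
      calc (2 : ℝ)⁻¹ ^ (K + 1)
          < (2 : ℝ)⁻¹ ^ K := pow_lt_pow_right_of_lt_one₀ (by norm_num) (by norm_num) K.lt_succ_self
        _ ≤ cantorDist (H^[n] x) (H^[n] (x + z)) := le_cantorDist_of_ne K j hj hne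
end
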